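/- arXiv:2104.08118 — 2 statements merged into one kernel-verified Lean document; each statement's English description precedes it below -/
import Mathlib

section
/- In the SIR model with S(0) > 0 and I(0) ≥ 0, if the limits S∞ = lim_{t→∞} S(t) and I∞ = lim_{t→∞} I(t) exist with I∞ = 0, then, with C∞ = log(S(0)/S∞), one has γ C∞ / β = S(0) + I(0) - S∞. -/
open Set Filter

/-- A function with zero derivative on `Ici 0` is constant there. -/
lemma const_of_deriv_zero_aux {f : ℝ → ℝ}
    (h : ∀ t ∈ Set.Ici (0 : ℝ), HasDerivAt f 0 t) :
    ∀ t ∈ Set.Ici (0 : ℝ), f t = f 0 := by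
  intro t ht
  have key := constant_of_has_deriv_right_zero (f := f) (a := 0) (b := t)
    (fun x hx => (h x hx.1).continuousAt.continuousWithinAt)
    (fun x hx => (h x (Set.mem_Ici.2 hx.1)).hasDerivWithinAt)
  exact key t (Set.mem_Icc.2 ⟨ht, le_refl t⟩)

/-- Final size relation for the SIR model: with `C∞ = log (S(0)/S∞)`,
one has `γ C∞ / β = S(0) + I(0) - S∞`. -/
theorem sir_final_size (β γ : ℝ) (hβ : 0 < β) (hγ : 0 < γ)
    (S I R : ℝ → ℝ)
    (hS0 : 0 < S 0) (hI0 : 0 ≤ I 0)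
    (hS : ∀ t ∈ Set.Ici (0 : ℝ), HasDerivAt S (-β * S t * I t) t)
    (hI : ∀ t ∈ Set.Ici (0 : ℝ), HasDerivAt I (β * S t * I t - γ * I t) t)
    (hR : ∀ t ∈ Set.Ici (0 : ℝ), HasDerivAt R (γ * I t) t)
    (Sinf : ℝ) (hSinf : 0 < Sinf)
    (hSlim : Filter.Tendsto S Filter.atTop (nhds Sinf))
    (hIlim : Filter.Tendsto I Filter.atTop (nhds 0)) :
    γ * Real.log (S 0 / Sinf) / β = S 0 + I 0 - Sinf := by
  -- Extend I continuously to all of ℝ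
  set I' : ℝ → ℝ := fun t => I (max t 0) with hI'def
  have hI'cont : Continuous I' := by
    rw [continuous_iff_continuousAt]
    intro t
    have hm : ContinuousAt (fun t : ℝ => max t 0) t :=
      (continuous_id.max continuous_const).continuousAt
    show ContinuousAt (I ∘ fun t : ℝ => max t 0) t
    exact ContinuousAt.comp (f := fun t : ℝ => max t 0) (x := t)
      ((hI (max t 0) (le_max_right t 0)).continuousAt) hm
  have hI'eq : ∀ t ∈ Set.Ici (0 : ℝ), I' t = I t := by
    intro t ht; simp [hI'def, max_eq_left (Set.mem_Ici.1 ht)]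
  -- antiderivative of I'
  set J : ℝ → ℝ := fun t => ∫ s in (0:ℝ)..t, I' s with hJdef
  have hJ : ∀ t : ℝ, HasDerivAt J (I' t) t := fun t =>
    (hI'cont.integral_hasStrictDerivAt 0 t).hasDerivAt
  -- S is positive on Ici 0
  have hKderiv : ∀ t ∈ Set.Ici (0 : ℝ),
      HasDerivAt (fun t => S t * Real.exp (β * J t)) 0 t := by
    intro t ht
    have h1 : HasDerivAt (fun t => Real.exp (β * J t))
        (β * I' t * Real.exp (β * J t)) t := by
      have := (((hJ t).const_mul β).exp)
      convert this using 1; ring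
    have h2 := (hS t ht).mul h1
    refine h2.congr_deriv ?_
    rw [hI'eq t ht]; ring
  have hKconst := const_of_deriv_zero_aux hKderiv
  have hJ0 : J 0 = 0 := by simp [hJdef]
  have hSpos : ∀ t ∈ Set.Ici (0 : ℝ), 0 < S t := by
    intro t ht
    have h := hKconst t ht
    simp only [hJ0, mul_zero, Real.exp_zero, mul_one] at h
    nlinarith [Real.exp_pos (β * J t), h]
  -- conserved quantity V
  set V : ℝ → ℝ := fun t => γ * Real.log (S t) - β * (S t + I t) with hVdef
  have hVderiv : ∀ t ∈ Set.Ici (0 : ℝ), HasDerivAt V 0 t := by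
    intro t ht
    have hSne : S t ≠ 0 := (hSpos t ht).ne'
    have h1 := (((hS t ht).log hSne).const_mul γ).sub
      (((hS t ht).add (hI t ht)).const_mul β)
    refine h1.congr_deriv ?_
    field_simp
    ring
  have hVconst := const_of_deriv_zero_aux hVderiv
  -- take the limit
  have hVlim : Filter.Tendsto V Filter.atTop
      (nhds (γ * Real.log Sinf - β * (Sinf + 0))) :=
    ((hSlim.log hSinf.ne').const_mul γ).sub ((hSlim.add hIlim).const_mul β)
  have hVconstlim : Filter.Tendsto V Filter.atTop (nhds (V 0)) := by
    apply Tendsto.congr' _ tendsto_const_nhds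
    filter_upwards [eventually_ge_atTop (0:ℝ)] with t ht
    exact (hVconst t ht).symm
  have hkey : V 0 = γ * Real.log Sinf - β * (Sinf + 0) :=
    tendsto_nhds_unique hVconstlim hVlim
  simp only [hVdef, add_zero] at hkey
  rw [Real.log_div hS0.ne' hSinf.ne']
  field_simp
  linarith
end

section
/- For the SEAIR model, the spectral radius of the next-generation matrix K = FV^{-1}, with F and V as specified, equals R₀ = ((1-p)β_A/γ_A + pβ_I/γ_I)·S(0). -/
/-!
`V` is lower triangular and is inverted by hand; then `K = F V⁻¹` has only its first row
nonzero, so it is upper triangular with diagonal `(R₀, 0, 0)`, and the eigenvalues of a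
triangular matrix are its diagonal entries.
-/

open Matrix

theorem Matrix.IsUpperTriangular.spectrum_eq {n K : Type*} [Fintype n] [DecidableEq n]
    [LinearOrder n] [Field K] {A : Matrix n n K} (hA : A.IsUpperTriangular) :
    spectrum K A = Set.range A.diag := by
  ext z
  rw [mem_spectrum_iff_isRoot_charpoly, charpoly_of_isUpperTriangular A hA, Polynomial.IsRoot,
    Polynomial.eval_prod, Finset.prod_eq_zero_iff]
  simp [sub_eq_zero, eq_comm]

theorem seair_inv_transitionMatrix {σ γA γI : ℝ} (p : ℝ) (hσ : σ ≠ 0) (hγA : γA ≠ 0)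
    (hγI : γI ≠ 0) :
    (!![σ, 0, 0; -(1 - p) * σ, γA, 0; -p * σ, 0, γI])⁻¹ =
      !![σ⁻¹, 0, 0; (1 - p) / γA, γA⁻¹, 0; p / γI, 0, γI⁻¹] := by
  apply inv_eq_right_inv
  rw [mul_fin_three, one_fin_three]
  ext i j
  fin_cases i <;> fin_cases j <;> simp <;> field_simp <;> ring

theorem seair_nextGenerationMatrix {βA βI γA γI σ p S0 : ℝ} (hσ : σ ≠ 0) (hγA : γA ≠ 0)
    (hγI : γI ≠ 0) :
    !![0, βA * S0, βI * S0; 0, 0, 0; 0, 0, 0] *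
        (!![σ, 0, 0; -(1 - p) * σ, γA, 0; -p * σ, 0, γI])⁻¹ =
      !![((1 - p) * βA / γA + p * βI / γI) * S0, βA * S0 / γA, βI * S0 / γI;
        0, 0, 0; 0, 0, 0] := by
  rw [seair_inv_transitionMatrix p hσ hγA hγI, mul_fin_three]
  ext i j
  fin_cases i <;> fin_cases j <;> simp <;> field_simp

theorem spectrum_map_firstRowOnly (a b c : ℝ) :
    spectrum ℂ ((!![a, b, c; 0, 0, 0; 0, 0, 0] : Matrix (Fin 3) (Fin 3) ℝ).map
      (algebraMap ℝ ℂ)) = {(a : ℂ), 0} := by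
  have hA : (!![a, b, c; 0, 0, 0; 0, 0, 0] : Matrix (Fin 3) (Fin 3) ℝ).IsUpperTriangular := by
    intro i j hij
    fin_cases i <;> fin_cases j <;> simp_all
  rw [IsUpperTriangular.spectrum_eq (hA.map (algebraMap ℝ ℂ))]
  ext z
  simp [Fin.exists_fin_succ, eq_comm]

theorem isGreatest_norm_pair {r : ℝ} (hr : 0 ≤ r) :
    IsGreatest {x : ℝ | ∃ z ∈ ({(r : ℂ), 0} : Set ℂ), x = ‖z‖} r := by
  have hnorm : ‖(r : ℂ)‖ = r := by rw [Complex.norm_real, Real.norm_of_nonneg hr]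
  refine ⟨⟨r, by simp, hnorm.symm⟩, ?_⟩
  rintro x ⟨z, rfl | rfl, rfl⟩
  · exact hnorm.le
  · simpa using hr

/-- For the SEAIR model, the spectral radius of the next-generation matrix
`K = F V⁻¹` equals `R₀ = ((1-p) β_A/γ_A + p β_I/γ_I) S(0)`: `R₀` is the
greatest modulus of the (complex) eigenvalues of `K`. -/
theorem seair_R0_spectral_radius (βA βI γA γI σ p S0 : ℝ)
    (hβA : 0 < βA) (hβI : 0 < βI) (hγA : 0 < γA) (hγI : 0 < γI)
    (hσ : 0 < σ) (hp : p ∈ Set.Icc (0 : ℝ) 1) (hS0 : 0 < S0)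
    (F V : Matrix (Fin 3) (Fin 3) ℝ)
    (hF : F = !![0, βA * S0, βI * S0; 0, 0, 0; 0, 0, 0])
    (hV : V = !![σ, 0, 0; -(1 - p) * σ, γA, 0; -p * σ, 0, γI]) :
    IsGreatest {x : ℝ | ∃ z ∈ spectrum ℂ ((F * V⁻¹).map (algebraMap ℝ ℂ)),
        x = ‖z‖}
      (((1 - p) * βA / γA + p * βI / γI) * S0) := by
  obtain ⟨hp0, hp1⟩ := hp
  have hR0 : 0 ≤ ((1 - p) * βA / γA + p * βI / γI) * S0 := by
    have : 0 ≤ 1 - p := sub_nonneg.mpr hp1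
    positivity
  rw [hF, hV, seair_nextGenerationMatrix hσ.ne' hγA.ne' hγI.ne', spectrum_map_firstRowOnly]
  exact isGreatest_norm_pair hR0
end
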